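/- arXiv:1506.04565 — 2 statements merged into one kernel-verified Lean document; each statement's English description precedes it below -/
import Mathlib

section
/- Let c : (ℝ^d)^N → [0, +∞] be a continuous cost function and μ₁,…,μ_N absolutely continuous Borel probability measures on ℝ^d. Suppose γ ∈ Π(μ₁,…,μ_N) is an optimal plan for the multi-marginal Monge–Kantorovich problem and that the optimal value is finite. Then γ is concentrated on a c-cyclically monotone set. -/
open MeasureTheory ENNReal

/-!
If the set `A` of pairs `(x, y)` that an exchange of coordinates strictly improves had positive
`γ ⊗ γ`-measure, one could replace `γ ⊗ γ` on `A` by its image under the exchange and average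
the two projections of the result. Every coordinate of `x` and `y` is either kept or swapped, so
this new plan has the marginals of `γ`, but its cost is strictly lower, against optimality.
Hence, for continuous `c`, the open set of improvable pairs is `γ ⊗ γ`-null and misses
`supp γ × supp γ`, and the support of `γ` is the required `c`-cyclically monotone set.
-/

namespace MeasureTheory

theorem lintegral_restrict_compl_add_map_lt {α : Type*} [MeasurableSpace α] {m : Measure α}
    {A : Set α} (hA : MeasurableSet A) (hA₀ : m A ≠ 0) {S : α → α} (hS : Measurable S)
    {F : α → ℝ≥0∞} (hF : Measurable F) (hFfin : ∫⁻ z, F z ∂m ≠ ∞)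
    (hlt : ∀ z ∈ A, F (S z) < F z) :
    ∫⁻ z, F z ∂(m.restrict Aᶜ + (m.restrict A).map S) < ∫⁻ z, F z ∂m := by
  have hfin_on : ∀ B, ∫⁻ z in B, F z ∂m ≠ ∞ := fun B =>
    ne_top_of_le_ne_top hFfin (setLIntegral_le_lintegral B F)
  have hlt_on : ∫⁻ z in A, F (S z) ∂m < ∫⁻ z in A, F z ∂m :=
    setLIntegral_strict_mono hA hA₀ hF
      (ne_top_of_le_ne_top (hfin_on A) (setLIntegral_mono hF fun z hz => (hlt z hz).le))
      (.of_forall hlt)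
  calc ∫⁻ z, F z ∂(m.restrict Aᶜ + (m.restrict A).map S)
      = ∫⁻ z in Aᶜ, F z ∂m + ∫⁻ z in A, F (S z) ∂m := by
        rw [lintegral_add_measure, lintegral_map hF hS]
    _ < ∫⁻ z in Aᶜ, F z ∂m + ∫⁻ z in A, F z ∂m := ENNReal.add_lt_add_left (hfin_on _) hlt_on
    _ = ∫⁻ z, F z ∂m := by rw [add_comm, lintegral_add_compl _ hA]

namespace Measure

theorem support_prod_subset {X Y : Type*} [TopologicalSpace X] [MeasurableSpace X]
    [TopologicalSpace Y] [MeasurableSpace Y] (μ : Measure X) (ν : Measure Y) [SFinite ν] :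
    μ.support ×ˢ ν.support ⊆ (μ.prod ν).support := by
  rintro ⟨x, y⟩ ⟨hx, hy⟩
  rw [mem_support_iff_forall] at hx hy ⊢
  intro W hW
  obtain ⟨U, hU, V, hV, hUV⟩ := mem_nhds_prod_iff.1 hW
  calc 0 < μ U * ν V := ENNReal.mul_pos (hx U hU).ne' (hy V hV).ne'
    _ ≤ μ.prod ν (U ×ˢ V) := (prod_prod U V).ge
    _ ≤ μ.prod ν W := measure_mono hUV

end Measure

end MeasureTheory

namespace MultiMarginal

section Exchange

variable {ι β : Type*} [DecidableEq ι]

/-- The pair `(X(x,y,p), Y(x,y,p))`: the coordinates of `x` and `y` outside `p` are swapped. -/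
def exchange (p : Finset ι) (z : (ι → β) × (ι → β)) : (ι → β) × (ι → β) :=
  (p.piecewise z.1 z.2, p.piecewise z.2 z.1)

theorem measurable_exchange [MeasurableSpace β] (p : Finset ι) :
    Measurable (exchange (β := β) p) := by
  refine .prodMk (measurable_pi_lambda _ fun i => ?_) (measurable_pi_lambda _ fun i => ?_) <;>
    simp only [Finset.piecewise] <;> split_ifs <;> fun_prop

theorem continuous_exchange [TopologicalSpace β] (p : Finset ι) :
    Continuous (exchange (β := β) p) := by
  refine .prodMk (continuous_pi fun i => ?_) (continuous_pi fun i => ?_) <;>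
    simp only [Finset.piecewise] <;> split_ifs <;> fun_prop

theorem isOpen_setOf_exchange_lt [TopologicalSpace β] {c : (ι → β) → ℝ≥0∞} (hc : Continuous c)
    (p : Finset ι) :
    IsOpen {z | c (exchange p z).1 + c (exchange p z).2 < c z.1 + c z.2} :=
  isOpen_lt ((hc.comp (continuous_exchange p).fst).add (hc.comp (continuous_exchange p).snd))
    (by fun_prop)

end Exchange

section MarginalSum

variable {α : Type*} [MeasurableSpace α]

noncomputable def marginalSum (ν : Measure (α × α)) : Measure α :=
  ν.map Prod.fst + ν.map Prod.snd

theorem marginalSum_add (ν₁ ν₂ : Measure (α × α)) :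
    marginalSum (ν₁ + ν₂) = marginalSum ν₁ + marginalSum ν₂ := by
  simp only [marginalSum, Measure.map_add _ _ measurable_fst, Measure.map_add _ _ measurable_snd]
  abel

theorem marginalSum_apply_univ (ν : Measure (α × α)) :
    marginalSum ν Set.univ = 2 * ν Set.univ := by
  simp [marginalSum, Measure.map_apply measurable_fst, Measure.map_apply measurable_snd, two_mul]

theorem lintegral_marginalSum {c : α → ℝ≥0∞} (hc : Measurable c) (ν : Measure (α × α)) :
    ∫⁻ x, c x ∂marginalSum ν = ∫⁻ z, c z.1 + c z.2 ∂ν := by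
  rw [marginalSum, lintegral_add_measure, lintegral_map hc measurable_fst,
    lintegral_map hc measurable_snd]
  exact (lintegral_add_left (hc.comp measurable_fst) _).symm

theorem marginalSum_prod_self (γ : Measure α) [IsProbabilityMeasure γ] :
    marginalSum (γ.prod γ) = (2 : ℝ≥0∞) • γ := by
  simp [marginalSum, two_smul]

end MarginalSum

variable {ι β : Type*} [DecidableEq ι] [MeasurableSpace β]

theorem map_eval_marginalSum_map_exchange (ν : Measure ((ι → β) × (ι → β))) (p : Finset ι)
    (i : ι) :
    (marginalSum (ν.map (exchange p))).map (fun x => x i) =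
      (marginalSum ν).map (fun x => x i) := by
  have hi : Measurable fun x : ι → β => x i := measurable_pi_apply i
  simp only [marginalSum, Measure.map_add _ _ hi, Measure.map_map hi measurable_fst,
    Measure.map_map hi measurable_snd,
    Measure.map_map (hi.comp measurable_fst) (measurable_exchange p),
    Measure.map_map (hi.comp measurable_snd) (measurable_exchange p)]
  by_cases hip : i ∈ p
  · simp [Function.comp_def, exchange, hip]
  · simp [Function.comp_def, exchange, hip, add_comm]

theorem exists_lintegral_lt_of_exchange_lt {γ : Measure (ι → β)} [IsProbabilityMeasure γ]
    {c : (ι → β) → ℝ≥0∞} (hc : Measurable c) (hfin : ∫⁻ x, c x ∂γ ≠ ∞) (p : Finset ι)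
    (hA : γ.prod γ {z | c (exchange p z).1 + c (exchange p z).2 < c z.1 + c z.2} ≠ 0) :
    ∃ γ' : Measure (ι → β), IsProbabilityMeasure γ' ∧
      (∀ i, γ'.map (fun x => x i) = γ.map (fun x => x i)) ∧ ∫⁻ x, c x ∂γ' < ∫⁻ x, c x ∂γ := by
  set A := {z | c (exchange p z).1 + c (exchange p z).2 < c z.1 + c z.2}
  set m := γ.prod γ
  set m' := m.restrict Aᶜ + (m.restrict A).map (exchange p)
  have hAm : MeasurableSet A := measurableSet_lt
    ((hc.comp (measurable_exchange p).fst).add (hc.comp (measurable_exchange p).snd))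
    (by fun_prop)
  have hγ : (2 : ℝ≥0∞)⁻¹ • marginalSum m = γ := by
    rw [marginalSum_prod_self, smul_smul, ENNReal.inv_mul_cancel two_ne_zero ofNat_ne_top,
      one_smul]
  have hF : Measurable fun z : (ι → β) × (ι → β) => c z.1 + c z.2 := by fun_prop
  have hFfin : ∫⁻ z, c z.1 + c z.2 ∂m ≠ ∞ := by
    rw [← lintegral_marginalSum hc, marginalSum_prod_self, lintegral_smul_measure]
    exact ENNReal.mul_ne_top ofNat_ne_top hfin
  refine ⟨(2 : ℝ≥0∞)⁻¹ • marginalSum m', ⟨?_⟩, fun i => ?_, ?_⟩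
  · rw [Measure.smul_apply, marginalSum_apply_univ, Measure.add_apply,
      Measure.map_apply (measurable_exchange p) .univ, Set.preimage_univ,
      Measure.restrict_apply_univ, Measure.restrict_apply_univ, add_comm,
      measure_add_measure_compl hAm]
    simp [measure_univ, ENNReal.inv_mul_cancel two_ne_zero ofNat_ne_top]
  · rw [← hγ, Measure.map_smul, Measure.map_smul, marginalSum_add,
      Measure.map_add _ _ (measurable_pi_apply i), map_eval_marginalSum_map_exchange,
      ← Measure.map_add _ _ (measurable_pi_apply i), ← marginalSum_add,
      Measure.restrict_compl_add_restrict hAm]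
  · rw [← hγ, lintegral_smul_measure, lintegral_smul_measure, lintegral_marginalSum hc,
      lintegral_marginalSum hc]
    exact ENNReal.mul_lt_mul_right (ENNReal.inv_ne_zero.2 ofNat_ne_top)
      (ENNReal.inv_ne_top.2 two_ne_zero) <|
      lintegral_restrict_compl_add_map_lt hAm hA (measurable_exchange p) hF hFfin fun _ hz => hz

theorem prod_self_setOf_exchange_lt_eq_zero {γ : Measure (ι → β)} [IsProbabilityMeasure γ]
    {c : (ι → β) → ℝ≥0∞} (hc : Measurable c) (hfin : ∫⁻ x, c x ∂γ ≠ ∞)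
    (hopt : ∀ γ' : Measure (ι → β), IsProbabilityMeasure γ' →
      (∀ i, γ'.map (fun x => x i) = γ.map (fun x => x i)) → ∫⁻ x, c x ∂γ ≤ ∫⁻ x, c x ∂γ')
    (p : Finset ι) :
    γ.prod γ {z | c (exchange p z).1 + c (exchange p z).2 < c z.1 + c z.2} = 0 := by
  by_contra hA
  obtain ⟨γ', hγ', hmarg, hlt⟩ := exists_lintegral_lt_of_exchange_lt hc hfin p hA
  exact (hopt γ' hγ' hmarg).not_gt hlt

end MultiMarginal

open MultiMarginal in
theorem optimal_plan_c_cyclically_monotone_general {d N : ℕ}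
    (c : (Fin N → EuclideanSpace ℝ (Fin d)) → ℝ≥0∞) (hc : Continuous c)
    (μ : Fin N → Measure (EuclideanSpace ℝ (Fin d)))
    (γ : Measure (Fin N → EuclideanSpace ℝ (Fin d))) [IsProbabilityMeasure γ]
    (hmarg : ∀ i, γ.map (fun x => x i) = μ i)
    (hopt : ∀ γ' : Measure (Fin N → EuclideanSpace ℝ (Fin d)), IsProbabilityMeasure γ' →
      (∀ i, γ'.map (fun x => x i) = μ i) → ∫⁻ x, c x ∂γ ≤ ∫⁻ x, c x ∂γ')
    (hfin : ∫⁻ x, c x ∂γ ≠ ⊤) :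
    ∃ Γ : Set (Fin N → EuclideanSpace ℝ (Fin d)), γ Γᶜ = 0 ∧
      ∀ x ∈ Γ, ∀ y ∈ Γ, ∀ p : Finset (Fin N),
        c x + c y ≤ c (fun i => if i ∈ p then x i else y i) +
          c (fun i => if i ∈ p then y i else x i) := by
  refine ⟨γ.support, Measure.measure_compl_support, fun x hx y hy p => not_lt.1 fun hlt => ?_⟩
  have hnull := prod_self_setOf_exchange_lt_eq_zero hc.measurable hfin
    (fun γ' hγ' hmarg' => hopt γ' hγ' fun i => (hmarg' i).trans (hmarg i)) p
  exact Measure.subset_compl_support_of_isOpen (isOpen_setOf_exchange_lt hc p) hnull hlt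
    (Measure.support_prod_subset γ γ (Set.mk_mem_prod hx hy))

/-- Optimal plans for a continuous multi-marginal cost `c : (ℝ^d)^N → [0, +∞]` with absolutely
continuous marginals and finite optimal value are concentrated on a `c`-cyclically monotone set:
for all `x, y` in the set and every partition `p ⊆ {1,…,N}`, exchanging the coordinates of `x`
and `y` outside `p` does not decrease the total cost. -/
theorem optimal_plan_c_cyclically_monotone {d N : ℕ}
    (c : (Fin N → EuclideanSpace ℝ (Fin d)) → ℝ≥0∞) (hc : Continuous c)
    (μ : Fin N → Measure (EuclideanSpace ℝ (Fin d))) [∀ i, IsProbabilityMeasure (μ i)]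
    (hac : ∀ i, μ i ≪ volume)
    (γ : Measure (Fin N → EuclideanSpace ℝ (Fin d))) [IsProbabilityMeasure γ]
    (hmarg : ∀ i, γ.map (fun x => x i) = μ i)
    (hopt : ∀ γ' : Measure (Fin N → EuclideanSpace ℝ (Fin d)), IsProbabilityMeasure γ' →
      (∀ i, γ'.map (fun x => x i) = μ i) → ∫⁻ x, c x ∂γ ≤ ∫⁻ x, c x ∂γ')
    (hfin : ∫⁻ x, c x ∂γ ≠ ⊤) :
    ∃ Γ : Set (Fin N → EuclideanSpace ℝ (Fin d)), γ Γᶜ = 0 ∧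
      ∀ x ∈ Γ, ∀ y ∈ Γ, ∀ p : Finset (Fin N),
        c x + c y ≤ c (fun i => if i ∈ p then x i else y i) +
          c (fun i => if i ∈ p then y i else x i) :=
  optimal_plan_c_cyclically_monotone_general c hc μ γ hmarg hopt hfin
end

section
/- Let μ be a Borel probability measure on ℝ^d that is absolutely continuous with respect to Lebesgue measure, and let c : (ℝ^d)^N → ℝ be a continuous cost function that is symmetric, i.e. invariant under every permutation of its N arguments. Then the infimum of ∫ c dγ over all γ ∈ Π_N(μ) equals the infimum of ∫ c dγ over all cyclically symmetric γ ∈ Π_N^{sym}(μ). -/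
open MeasureTheory ENNReal

/-!
Averaging a plan `γ ∈ Π_N(μ)` over the `N` cyclic shifts of the coordinates gives a cyclically
symmetric plan; its first marginal is the average of the marginals of `γ`, i.e. `μ`, and a
symmetric cost has the same integral against it as against `γ`. Conversely, a cyclically symmetric
plan is invariant under every cyclic shift, so all its marginals agree with the first one.
-/

variable {E : Type*} [MeasurableSpace E] {N : ℕ} [NeZero N]

lemma inv_natCast_smul_sum_const {M : Type*} [AddCommMonoid M] [Module ℝ≥0∞ M] (x : M) :
    (N : ℝ≥0∞)⁻¹ • ∑ _k : Fin N, x = x := by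
  rw [Finset.sum_const, Finset.card_univ, Fintype.card_fin, ← Nat.cast_smul_eq_nsmul ℝ≥0∞,
    smul_smul, ENNReal.inv_mul_cancel (NeZero.ne _ ∘ Nat.cast_eq_zero.1) (natCast_ne_top N),
    one_smul]

def cyclicShift (k : Fin N) : (Fin N → E) ≃ᵐ (Fin N → E) where
  toFun x i := x (i + k)
  invFun x i := x (i - k)
  left_inv x := funext fun i => by simp
  right_inv x := funext fun i => by simp
  measurable_toFun := measurable_pi_lambda _ fun _ => measurable_pi_apply _
  measurable_invFun := measurable_pi_lambda _ fun _ => measurable_pi_apply _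

@[simp]
lemma cyclicShift_apply (k : Fin N) (x : Fin N → E) (i : Fin N) :
    cyclicShift k x i = x (i + k) := rfl

@[simp]
lemma coe_cyclicShift_zero : ⇑(cyclicShift 0 : (Fin N → E) ≃ᵐ _) = id :=
  funext fun x => funext fun i => by simp

lemma cyclicShift_comp_cyclicShift (k l : Fin N) :
    ⇑(cyclicShift l : (Fin N → E) ≃ᵐ _) ∘ cyclicShift k = cyclicShift (l + k) :=
  funext fun x => funext fun i => by simp [add_assoc]

lemma map_cyclicShift_map_cyclicShift (γ : Measure (Fin N → E)) (k l : Fin N) :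
    (γ.map (cyclicShift k)).map (cyclicShift l) = γ.map (cyclicShift (l + k)) := by
  rw [Measure.map_map (cyclicShift l).measurable (cyclicShift k).measurable,
    cyclicShift_comp_cyclicShift]

lemma map_cyclicShift_eq_self (γ : Measure (Fin N → E)) (h : γ.map (cyclicShift 1) = γ)
    (k : Fin N) : γ.map (cyclicShift k) = γ := by
  open Fin.NatCast in
  suffices ∀ n : ℕ, γ.map (cyclicShift (n : Fin N)) = γ by simpa using this k
  intro n
  induction n with
  | zero => rw [Nat.cast_zero, coe_cyclicShift_zero, Measure.map_id]
  | succ n ih => rw [Nat.cast_succ, add_comm, ← map_cyclicShift_map_cyclicShift, ih, h]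

lemma map_eval_eq_map_eval_zero (γ : Measure (Fin N → E)) (h : γ.map (cyclicShift 1) = γ)
    (i : Fin N) : γ.map (fun x => x i) = γ.map (fun x => x 0) := by
  calc γ.map (fun x => x i) = (γ.map (cyclicShift i)).map (fun x => x 0) := by
        rw [Measure.map_map (measurable_pi_apply 0) (cyclicShift i).measurable]
        congr 1
        funext x
        simp
    _ = γ.map (fun x => x 0) := by rw [map_cyclicShift_eq_self γ h i]

noncomputable def cyclicAverage (γ : Measure (Fin N → E)) : Measure (Fin N → E) :=
  (N : ℝ≥0∞)⁻¹ • ∑ k, γ.map (cyclicShift k)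

instance isProbabilityMeasure_cyclicAverage (γ : Measure (Fin N → E)) [IsProbabilityMeasure γ] :
    IsProbabilityMeasure (cyclicAverage γ) := by
  constructor
  simp only [cyclicAverage, Measure.smul_apply, Measure.finsetSum_apply,
    Measure.map_apply (cyclicShift _).measurable MeasurableSet.univ, Set.preimage_univ,
    measure_univ]
  exact inv_natCast_smul_sum_const (M := ℝ≥0∞) 1

lemma map_cyclicShift_cyclicAverage (γ : Measure (Fin N → E)) (l : Fin N) :
    (cyclicAverage γ).map (cyclicShift l) = cyclicAverage γ := by
  rw [cyclicAverage, Measure.map_smul,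
    Measure.map_finset_sum' (cyclicShift l).measurable.aemeasurable]
  simp_rw [map_cyclicShift_map_cyclicShift]
  congr 1
  exact Fintype.sum_equiv (Equiv.addLeft l) _ _ fun _ => rfl

lemma map_eval_cyclicAverage {γ : Measure (Fin N → E)} {ν : Measure E}
    (hγ : ∀ i, γ.map (fun x => x i) = ν) (i : Fin N) :
    (cyclicAverage γ).map (fun x => x i) = ν := by
  rw [cyclicAverage, Measure.map_smul, Measure.map_finset_sum' (measurable_pi_apply i).aemeasurable]
  simp_rw [Measure.map_map (measurable_pi_apply i) (cyclicShift _).measurable]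
  convert inv_natCast_smul_sum_const (N := N) ν using 3 with k
  exact hγ (i + k)

section Integral

variable {F : Type*} [NormedAddCommGroup F] {f : (Fin N → E) → F}
  (γ : Measure (Fin N → E))

lemma integral_map_cyclicShift [NormedSpace ℝ F] {k : Fin N} (hf : f ∘ cyclicShift k = f) :
    ∫ x, f x ∂γ.map (cyclicShift k) = ∫ x, f x ∂γ := by
  rw [integral_map_equiv, ← Function.comp_def, hf]

lemma integrable_map_cyclicShift_iff {k : Fin N} (hf : f ∘ cyclicShift k = f) :
    Integrable f (γ.map (cyclicShift k)) ↔ Integrable f γ := by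
  rw [integrable_map_equiv, hf]

lemma integral_cyclicAverage [NormedSpace ℝ F] (hf : ∀ k, f ∘ cyclicShift k = f) :
    ∫ x, f x ∂cyclicAverage γ = ∫ x, f x ∂γ := by
  by_cases hfγ : Integrable f γ
  · rw [cyclicAverage, integral_smul_measure, integral_finsetSum_measure
      fun k _ => (integrable_map_cyclicShift_iff γ (hf k)).2 hfγ]
    simp_rw [integral_map_cyclicShift γ (hf _)]
    rw [Finset.sum_const, Finset.card_univ, Fintype.card_fin, toReal_inv, toReal_natCast,
      ← Nat.cast_smul_eq_nsmul ℝ, smul_smul, inv_mul_cancel₀ (Nat.cast_ne_zero.2 (NeZero.ne N)),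
      one_smul]
  · have : ¬Integrable f (cyclicAverage γ) := by
      rw [cyclicAverage, integrable_smul_measure (ENNReal.inv_ne_zero.2 (natCast_ne_top N))
        (ENNReal.inv_ne_top.2 (NeZero.ne _ ∘ Nat.cast_eq_zero.1)), integrable_finsetSum_measure]
      simpa [integrable_map_cyclicShift_iff γ (hf _)] using hfγ
    rw [integral_undef hfγ, integral_undef this]

end Integral

theorem inf_plans_eq_inf_symmetric_plans_general {d N : ℕ} [NeZero N]
    (μ : Measure (EuclideanSpace ℝ (Fin d)))
    (c : (Fin N → EuclideanSpace ℝ (Fin d)) → ℝ)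
    (hsym : ∀ (σ : Equiv.Perm (Fin N)) (x : Fin N → EuclideanSpace ℝ (Fin d)), c (x ∘ σ) = c x) :
    sInf {r : ℝ | ∃ γ : Measure (Fin N → EuclideanSpace ℝ (Fin d)),
        IsProbabilityMeasure γ ∧ (∀ i, γ.map (fun x => x i) = μ) ∧ r = ∫ x, c x ∂γ}
      = sInf {r : ℝ | ∃ γ : Measure (Fin N → EuclideanSpace ℝ (Fin d)),
        IsProbabilityMeasure γ ∧ γ.map (fun x i => x (i + 1)) = γ ∧
        γ.map (fun x => x 0) = μ ∧ r = ∫ x, c x ∂γ} := by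
  have hc : ∀ k : Fin N, c ∘ cyclicShift k = c := fun k => funext (hsym (Equiv.addRight k))
  congr 1
  ext r
  constructor
  · rintro ⟨γ, hγ, hmarg, rfl⟩
    exact ⟨cyclicAverage γ, inferInstance, map_cyclicShift_cyclicAverage γ 1,
      map_eval_cyclicAverage hmarg 0, (integral_cyclicAverage γ hc).symm⟩
  · rintro ⟨γ, hγ, hcyc, h0, rfl⟩
    exact ⟨γ, hγ, fun i => (map_eval_eq_map_eval_zero γ hcyc i).trans h0, rfl⟩

/-- For a continuous symmetric cost and an absolutely continuous probability marginal `μ`, the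
multi-marginal Monge–Kantorovich infimum over all plans in `Π_N(μ)` equals the infimum over
cyclically symmetric plans in `Π_N^{sym}(μ)`. -/
theorem inf_plans_eq_inf_symmetric_plans {d N : ℕ} [NeZero N]
    (μ : Measure (EuclideanSpace ℝ (Fin d))) [IsProbabilityMeasure μ] (hac : μ ≪ volume)
    (c : (Fin N → EuclideanSpace ℝ (Fin d)) → ℝ) (hc : Continuous c)
    (hsym : ∀ (σ : Equiv.Perm (Fin N)) (x : Fin N → EuclideanSpace ℝ (Fin d)), c (x ∘ σ) = c x) :
    sInf {r : ℝ | ∃ γ : Measure (Fin N → EuclideanSpace ℝ (Fin d)),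
        IsProbabilityMeasure γ ∧ (∀ i, γ.map (fun x => x i) = μ) ∧ r = ∫ x, c x ∂γ}
      = sInf {r : ℝ | ∃ γ : Measure (Fin N → EuclideanSpace ℝ (Fin d)),
        IsProbabilityMeasure γ ∧ γ.map (fun x i => x (i + 1)) = γ ∧
        γ.map (fun x => x 0) = μ ∧ r = ∫ x, c x ∂γ} :=
  inf_plans_eq_inf_symmetric_plans_general μ c hsym
end
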